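/- The Jaccard distance 1 − |A ∩ B|/|A ∪ B| on finite sets satisfies the triangle inequality: for finite sets A, B, C, 1 − |A∩C|/|A∪C| ≤ (1 − |A∩B|/|A∪B|) + (1 − |B∩C|/|B∪C|), where the ratio is defined as 1 when both sets are empty. -/
import Mathlib


/-- Jaccard distance `1 - |A∩B|/|A∪B|`, with `d(∅,∅) = 0`. -/
def jaccardDist {α : Type*} [DecidableEq α] (A B : Finset α) : ℚ :=
  if A ∪ B = ∅ then 0 else 1 - ((A ∩ B).card : ℚ) / ((A ∪ B).card : ℚ)

lemma jaccardDist_nonneg {α : Type*} [DecidableEq α] (A B : Finset α) :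
    0 ≤ jaccardDist A B := by
  unfold jaccardDist
  split
  · exact le_refl 0
  · have h1 : (A ∩ B).card ≤ (A ∪ B).card :=
      Finset.card_le_card (Finset.inter_subset_union)
    have h2 : (0:ℚ) < (A ∪ B).card := by
      have : (A ∪ B).Nonempty := Finset.nonempty_iff_ne_empty.2 (by assumption)
      exact_mod_cast Finset.card_pos.2 this
    have : ((A ∩ B).card : ℚ) / ((A ∪ B).card : ℚ) ≤ 1 := by
      rw [div_le_one h2]; exact_mod_cast h1
    linarith

lemma card_inter_add_card_symmDiff {α : Type*} [DecidableEq α] (A B : Finset α) :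
    (A ∩ B).card + (symmDiff A B).card = (A ∪ B).card := by
  rw [← Finset.card_union_of_disjoint]
  · congr 1
    ext x
    simp [Finset.mem_symmDiff]
    tauto
  · rw [Finset.disjoint_left]
    intro x hx hx'
    simp [Finset.mem_symmDiff] at hx hx'
    tauto

lemma key_nat {α : Type*} [DecidableEq α] (A B C : Finset α) :
    (symmDiff A C).card + 2 * (B \ (A ∪ C)).card ≤ (symmDiff A B).card + (symmDiff B C).card := by
  have h1 : (symmDiff A B).card + (symmDiff B C).card
      = ((symmDiff A B) ∪ (symmDiff B C)).card + ((symmDiff A B) ∩ (symmDiff B C)).card :=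
    (Finset.card_union_add_card_inter _ _).symm
  have h2 : (symmDiff A C) ∪ (B \ (A ∪ C)) ⊆ (symmDiff A B) ∪ (symmDiff B C) := by
    intro x hx
    simp [Finset.mem_symmDiff] at hx ⊢
    tauto
  have h3 : B \ (A ∪ C) ⊆ (symmDiff A B) ∩ (symmDiff B C) := by
    intro x hx
    simp [Finset.mem_symmDiff] at hx ⊢
    tauto
  have h4 : Disjoint (symmDiff A C) (B \ (A ∪ C)) := by
    rw [Finset.disjoint_left]
    intro x hx hx'
    simp [Finset.mem_symmDiff] at hx hx'
    tauto
  have h5 : (symmDiff A C).card + (B \ (A ∪ C)).card ≤ ((symmDiff A B) ∪ (symmDiff B C)).card := by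
    rw [← Finset.card_union_of_disjoint h4]
    exact Finset.card_le_card h2
  have h6 : (B \ (A ∪ C)).card ≤ ((symmDiff A B) ∩ (symmDiff B C)).card :=
    Finset.card_le_card h3
  omega

lemma union3_card {α : Type*} [DecidableEq α] (A B C : Finset α) :
    (A ∪ B ∪ C).card = (A ∪ C).card + (B \ (A ∪ C)).card := by
  rw [← Finset.card_union_of_disjoint (Finset.disjoint_sdiff)]
  congr 1
  ext x
  simp
  tauto

lemma jaccard_eq {α : Type*} [DecidableEq α] (A B : Finset α) (h : A ∪ B ≠ ∅) :
    jaccardDist A B = ((symmDiff A B).card : ℚ) / ((A ∪ B).card : ℚ) := by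
  unfold jaccardDist
  rw [if_neg h]
  have hu : (0:ℚ) < (A ∪ B).card := by
    have : (A ∪ B).Nonempty := Finset.nonempty_iff_ne_empty.2 h
    exact_mod_cast Finset.card_pos.2 this
  have hc : ((A ∩ B).card : ℚ) + ((symmDiff A B).card : ℚ) = ((A ∪ B).card : ℚ) := by
    exact_mod_cast congrArg (Nat.cast : ℕ → ℚ) (card_inter_add_card_symmDiff A B)
  field_simp
  linarith

/-- The Jaccard distance satisfies the triangle inequality. -/
theorem jaccardDist_triangle {α : Type*} [DecidableEq α] (A B C : Finset α) :
    jaccardDist A C ≤ jaccardDist A B + jaccardDist B C := by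
  by_cases hAC : A ∪ C = ∅
  · have : jaccardDist A C = 0 := by unfold jaccardDist; rw [if_pos hAC]
    rw [this]
    have := jaccardDist_nonneg A B
    have := jaccardDist_nonneg B C
    linarith
  by_cases hAB : A ∪ B = ∅
  · rw [Finset.union_eq_empty] at hAB
    obtain ⟨hA, hB⟩ := hAB
    subst hA; subst hB
    simp [jaccardDist]
  by_cases hBC : B ∪ C = ∅
  · rw [Finset.union_eq_empty] at hBC
    obtain ⟨hB, hC⟩ := hBC
    subst hB; subst hC
    simp [jaccardDist]
  rw [jaccard_eq A C hAC, jaccard_eq A B hAB, jaccard_eq B C hBC]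
  set s1 : ℚ := ((symmDiff A B).card : ℚ) with hs1
  set s2 : ℚ := ((symmDiff B C).card : ℚ) with hs2
  set s3 : ℚ := ((symmDiff A C).card : ℚ) with hs3
  set u1 : ℚ := ((A ∪ B).card : ℚ) with hu1
  set u2 : ℚ := ((B ∪ C).card : ℚ) with hu2
  set u3 : ℚ := ((A ∪ C).card : ℚ) with hu3
  set t : ℚ := ((B \ (A ∪ C)).card : ℚ) with ht
  set w : ℚ := ((A ∪ B ∪ C).card : ℚ) with hw
  have hu1pos : 0 < u1 := by
    rw [hu1]
    have : (A ∪ B).Nonempty := Finset.nonempty_iff_ne_empty.2 hAB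
    exact_mod_cast Finset.card_pos.2 this
  have hu2pos : 0 < u2 := by
    rw [hu2]
    have : (B ∪ C).Nonempty := Finset.nonempty_iff_ne_empty.2 hBC
    exact_mod_cast Finset.card_pos.2 this
  have hu3pos : 0 < u3 := by
    rw [hu3]
    have : (A ∪ C).Nonempty := Finset.nonempty_iff_ne_empty.2 hAC
    exact_mod_cast Finset.card_pos.2 this
  have htnn : 0 ≤ t := by positivity
  have hweq : w = u3 + t := by rw [hw, hu3, ht]; exact_mod_cast union3_card A B C
  have hwpos : 0 < w := by linarith
  have hkey : s3 + 2 * t ≤ s1 + s2 := by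
    rw [hs3, ht, hs1, hs2]
    exact_mod_cast key_nat A B C
  have hs3u3 : s3 ≤ u3 := by
    have : (symmDiff A C).card ≤ (A ∪ C).card := by
      have := card_inter_add_card_symmDiff A C
      omega
    rw [hs3, hu3]
    exact_mod_cast this
  have hs1nn : 0 ≤ s1 := by positivity
  have hs2nn : 0 ≤ s2 := by positivity
  have hu1w : u1 ≤ w := by
    rw [hu1, hw]
    have : A ∪ B ⊆ A ∪ B ∪ C := by
      intro x hx; simp at hx ⊢; tauto
    exact_mod_cast Finset.card_le_card this
  have hu2w : u2 ≤ w := by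
    have : B ∪ C ⊆ A ∪ B ∪ C := by
      intro x hx; simp at hx ⊢; tauto
    rw [hu2, hw]
    exact_mod_cast Finset.card_le_card this
  have h1 : s1 / w ≤ s1 / u1 := div_le_div_of_nonneg_left hs1nn hu1pos hu1w
  have h2 : s2 / w ≤ s2 / u2 := div_le_div_of_nonneg_left hs2nn hu2pos hu2w
  have h3 : s3 / u3 ≤ (s1 + s2) / w := by
    rw [div_le_div_iff₀ hu3pos hwpos]
    nlinarith
  calc s3 / u3 ≤ (s1 + s2) / w := h3
    _ = s1 / w + s2 / w := by ring
    _ ≤ s1 / u1 + s2 / u2 := by linarith
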